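/- arXiv:1906.00914 — 2 statements merged into one kernel-verified Lean document; each statement's English description precedes it below -/
import Mathlib

section
/- For all k, r ∈ ℕ and every nonempty finite set V: (1) if γ ∈ P(V^k) is graph-like, then WL_{k,r}∘γ is graph-like; (2) if k ≥ 2 and γ ∈ P(V^k) is graph-like and WL_{k,r}-stable, then pr_{k-1} γ is WL_{k-1,r}-stable. -/
open Classical Matrix

noncomputable section

/-- `k`-tuples of elements of `V`. -/
abbrev Tup (V : Type) (k : ℕ) := Fin k → V

variable {V : Type}

/-- `v⟨i,x⟩` : the tuple obtained from `v` by substituting, for each `s`,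
the entry of `v` in position `i s` by `x s`. -/
def substTup {k r : ℕ} (v : Tup V k) (i : Fin r → Fin k) (x : Tup V r) : Tup V k :=
  fun j => if h : ∃ s, i s = j then x h.choose else v j

/-- `pr_j v = (v_{j 1}, …, v_{j r})`. -/
def prTup {k r : ℕ} (j : Fin r → Fin k) (v : Tup V k) : Tup V r := fun s => v (j s)

/-- `(w_1, …, w_r, w_r, …, w_r) : V^k`. -/
def extendTup [Nonempty V] {r : ℕ} (k : ℕ) (w : Tup V r) : Tup V k := fun i =>
  if h : (i : ℕ) < r then w ⟨i, h⟩
  else if h' : 0 < r then w ⟨r - 1, by omega⟩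
  else Classical.arbitrary V

/-- The `r`-projection `pr_r γ` of a labelled partition (presented as a setoid) of `V^k`. -/
def prPart [Nonempty V] {k : ℕ} (r : ℕ) (γ : Setoid (Tup V k)) : Setoid (Tup V r) where
  r w w' := γ.r (extendTup k w) (extendTup k w')
  iseqv := ⟨fun _ => γ.iseqv.refl _, fun h => γ.iseqv.symm h, fun h h' => γ.iseqv.trans h h'⟩

/-- `v^τ`, the tuple with `i`-th entry `v (τ⁻¹ i)`. -/
def permTup {k : ℕ} (τ : Equiv.Perm (Fin k)) (v : Tup V k) : Tup V k := fun i => v (τ.symm i)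

/-- `γ ⪯ ρ` : the partition `ρ` refines the partition `γ`. -/
def Refines {A : Type*} (γ ρ : Setoid A) : Prop := ∀ u v : A, ρ.r u v → γ.r u v

/-- `γ ≈ ρ` : the partitions mutually refine each other. -/
def PartEquiv {A : Type*} (γ ρ : Setoid A) : Prop := Refines γ ρ ∧ Refines ρ γ

/-- Invariance of a partition of `V^k` under `Sym(k)`. -/
def Invariant {k : ℕ} (γ : Setoid (Tup V k)) : Prop :=
  ∀ u v : Tup V k, γ.r u v → ∀ τ : Equiv.Perm (Fin k), γ.r (permTup τ u) (permTup τ v)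

/-- `r`-consistency of a partition of `V^k`. -/
def Consistent [Nonempty V] {k : ℕ} (r : ℕ) (γ : Setoid (Tup V k)) : Prop :=
  ∀ u v : Tup V k, γ.r u v → ∀ j : Fin r → Fin k,
    (prPart r γ).r (prTup j u) (prTup j v)

/-- Graph-like partitions of `V^k`. -/
def GraphLike [Nonempty V] {k : ℕ} (γ : Setoid (Tup V k)) : Prop :=
  Invariant γ ∧ (∀ r ≤ k, Consistent r γ) ∧
    ∀ u v : Tup V k, γ.r u v → ∀ i j : Fin k, u i = u j → v i = v j

/-- `{x ∈ V^r : γ(u⟨i,x⟩) = φ_i for all i ∈ [k]^(r)}`, where the colour tuple `φ` is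
given by representatives. -/
def WLSet {k r : ℕ} (γ : Setoid (Tup V k)) (u : Tup V k)
    (φ : (Fin r → Fin k) → Tup V k) : Set (Tup V r) :=
  {x | ∀ i : Fin r → Fin k, Function.Injective i → γ.r (substTup u i x) (φ i)}

/-- `{x ∈ V^r : γ(u⟨i,x⟩) = σ}`, where the colour `σ` is given by a representative `w`. -/
def CSet {k r : ℕ} (γ : Setoid (Tup V k)) (u : Tup V k)
    (i : Fin r → Fin k) (w : Tup V k) : Set (Tup V r) :=
  {x | γ.r (substTup u i x) w}

/-- `WL_{k,r}`-stability of a partition of `V^k`. -/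
def WLStable {k : ℕ} (r : ℕ) (γ : Setoid (Tup V k)) : Prop :=
  r < k → ∀ u v : Tup V k, γ.r u v →
    ∀ φ : (Fin r → Fin k) → Tup V k, (WLSet γ u φ).ncard = (WLSet γ v φ).ncard

/-- `C_{k,r}`-stability of a partition of `V^k`. -/
def CStable {k : ℕ} (r : ℕ) (γ : Setoid (Tup V k)) : Prop :=
  r < k → ∀ u v : Tup V k, γ.r u v →
    ∀ i : Fin r → Fin k, Function.Injective i → ∀ w : Tup V k,
      (CSet γ u i w).ncard = (CSet γ v i w).ncard

/-- The matrix `χ^{γ,v}_{i,σ}`, with the colour `σ` given by a representative `w`. -/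
def chiMat (F : Type) [Field F] {k : ℕ} (γ : Setoid (Tup V k)) (v : Tup V k)
    (i : Fin 2 → Fin k) (w : Tup V k) : Matrix V V F :=
  Matrix.of fun x y => if γ.r (substTup v i ![x, y]) w then (1 : F) else 0

/-- The matrix `χ^{γ,v}_φ`, with the colour tuple `φ` given by representatives. -/
def chiMatT (F : Type) [Field F] {k : ℕ} (γ : Setoid (Tup V k)) (v : Tup V k)
    (φ : (Fin 2 → Fin k) → Tup V k) : Matrix V V F :=
  Matrix.of fun x y =>
    if ∀ i : Fin 2 → Fin k, Function.Injective i → γ.r (substTup v i ![x, y]) (φ i)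
    then (1 : F) else 0

/-- `IM_k^F`-stability of a partition of `V^k`. -/
def IMStable (F : Type) [Field F] [Fintype V] [DecidableEq V] {k : ℕ}
    (γ : Setoid (Tup V k)) : Prop :=
  2 < k → ∀ u v : Tup V k, γ.r u v →
    ∀ i : Fin 2 → Fin k, Function.Injective i →
      ∃ S : (Matrix V V F)ˣ, ∀ w : Tup V k,
        (S : Matrix V V F) * chiMat F γ u i w * ((S⁻¹ : (Matrix V V F)ˣ) : Matrix V V F)
          = chiMat F γ v i w

/-- `IMt_k^F`-stability of a partition of `V^k`. -/
def IMtStable (F : Type) [Field F] [Fintype V] [DecidableEq V] {k : ℕ}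
    (γ : Setoid (Tup V k)) : Prop :=
  2 < k → ∀ u v : Tup V k, γ.r u v →
    ∃ S : (Matrix V V F)ˣ, ∀ φ : (Fin 2 → Fin k) → Tup V k,
      (S : Matrix V V F) * chiMatT F γ u φ * ((S⁻¹ : (Matrix V V F)ˣ) : Matrix V V F)
        = chiMatT F γ v φ

/-- The refinement operator `WL_{k,r}`. -/
def WLop {k : ℕ} (r : ℕ) (γ : Setoid (Tup V k)) : Setoid (Tup V k) :=
  if r < k then
    { r := fun u v => γ.r u v ∧ ∀ φ : (Fin r → Fin k) → Tup V k,
        (WLSet γ u φ).ncard = (WLSet γ v φ).ncard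
      iseqv := by
        refine ⟨fun u => ⟨γ.iseqv.refl u, fun _ => rfl⟩, ?_, ?_⟩
        · rintro u v ⟨h1, h2⟩; exact ⟨γ.iseqv.symm h1, fun φ => (h2 φ).symm⟩
        · rintro u v w ⟨h1, h2⟩ ⟨h1', h2'⟩
          exact ⟨γ.iseqv.trans h1 h1', fun φ => (h2 φ).trans (h2' φ)⟩ }
  else γ

/-- The refinement operator `C_{k,r}`. -/
def Cop {k : ℕ} (r : ℕ) (γ : Setoid (Tup V k)) : Setoid (Tup V k) :=
  if r < k then
    { r := fun u v => γ.r u v ∧ ∀ i : Fin r → Fin k, Function.Injective i →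
        ∀ w : Tup V k, (CSet γ u i w).ncard = (CSet γ v i w).ncard
      iseqv := by
        refine ⟨fun u => ⟨γ.iseqv.refl u, fun _ _ _ => rfl⟩, ?_, ?_⟩
        · rintro u v ⟨h1, h2⟩; exact ⟨γ.iseqv.symm h1, fun i hi w => (h2 i hi w).symm⟩
        · rintro u v w ⟨h1, h2⟩ ⟨h1', h2'⟩
          exact ⟨γ.iseqv.trans h1 h1', fun i hi x => (h2 i hi x).trans (h2' i hi x)⟩ }
  else γ


theorem conjRefl {M : Type*} [Monoid M] (A : M) :
    ((1 : Mˣ) : M) * A * (((1 : Mˣ)⁻¹ : Mˣ) : M) = A := by simp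

theorem conjSymm {M : Type*} [Monoid M] (S : Mˣ) {A B : M}
    (h : (S : M) * A * ((S⁻¹ : Mˣ) : M) = B) :
    ((S⁻¹ : Mˣ) : M) * B * (((S⁻¹)⁻¹ : Mˣ) : M) = A := by
  subst h
  rw [inv_inv]
  simp [mul_assoc, Units.inv_mul_cancel_left, Units.inv_mul]

theorem conjTrans {M : Type*} [Monoid M] (S T : Mˣ) {A B C : M}
    (h1 : (S : M) * A * ((S⁻¹ : Mˣ) : M) = B)
    (h2 : (T : M) * B * ((T⁻¹ : Mˣ) : M) = C) :
    ((T * S : Mˣ) : M) * A * (((T * S)⁻¹ : Mˣ) : M) = C := by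
  subst h1; subst h2
  simp [Units.val_mul, _root_.mul_inv_rev, mul_assoc]

/-- The refinement operator `IM_k^F`. -/
def IMop (F : Type) [Field F] [Fintype V] [DecidableEq V] {k : ℕ}
    (γ : Setoid (Tup V k)) : Setoid (Tup V k) :=
  if 2 < k then
    { r := fun u v => γ.r u v ∧ ∀ i : Fin 2 → Fin k, Function.Injective i →
        ∃ S : (Matrix V V F)ˣ, ∀ w : Tup V k,
          (S : Matrix V V F) * chiMat F γ u i w * ((S⁻¹ : (Matrix V V F)ˣ) : Matrix V V F)
            = chiMat F γ v i w
      iseqv := by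
        refine ⟨fun u => ⟨γ.iseqv.refl u, fun i _ => ⟨1, fun w => conjRefl _⟩⟩, ?_, ?_⟩
        · rintro u v ⟨h1, h2⟩
          refine ⟨γ.iseqv.symm h1, fun i hi => ?_⟩
          obtain ⟨S, hS⟩ := h2 i hi
          exact ⟨S⁻¹, fun w => conjSymm S (hS w)⟩
        · rintro u v w ⟨h1, h2⟩ ⟨h1', h2'⟩
          refine ⟨γ.iseqv.trans h1 h1', fun i hi => ?_⟩
          obtain ⟨S, hS⟩ := h2 i hi
          obtain ⟨T, hT⟩ := h2' i hi
          exact ⟨T * S, fun x => conjTrans S T (hS x) (hT x)⟩ }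
  else γ

/-- The refinement operator `IMt_k^F`. -/
def IMtop (F : Type) [Field F] [Fintype V] [DecidableEq V] {k : ℕ}
    (γ : Setoid (Tup V k)) : Setoid (Tup V k) :=
  if 2 < k then
    { r := fun u v => γ.r u v ∧
        ∃ S : (Matrix V V F)ˣ, ∀ φ : (Fin 2 → Fin k) → Tup V k,
          (S : Matrix V V F) * chiMatT F γ u φ * ((S⁻¹ : (Matrix V V F)ˣ) : Matrix V V F)
            = chiMatT F γ v φ
      iseqv := by
        refine ⟨fun u => ⟨γ.iseqv.refl u, ⟨1, fun φ => conjRefl _⟩⟩, ?_, ?_⟩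
        · rintro u v ⟨h1, ⟨S, hS⟩⟩
          exact ⟨γ.iseqv.symm h1, ⟨S⁻¹, fun φ => conjSymm S (hS φ)⟩⟩
        · rintro u v w ⟨h1, ⟨S, hS⟩⟩ ⟨h1', ⟨T, hT⟩⟩
          exact ⟨γ.iseqv.trans h1 h1', ⟨T * S, fun φ => conjTrans S T (hS φ) (hT φ)⟩⟩ }
  else γ

/-- Iterate a refinement operator `|V|^k` times, reaching its stable fixed point. -/
def stabilize [Fintype V] {k : ℕ} (R : Setoid (Tup V k) → Setoid (Tup V k))
    (γ : Setoid (Tup V k)) : Setoid (Tup V k) :=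
  R^[Fintype.card V ^ k] γ

/-- A graph on `V` : a labelled partition of `V²` that is a rainbow. -/
def IsGraph (Γ : Setoid (Tup V 2)) : Prop :=
  (∀ u x y : V, Γ.r ![u, u] ![x, y] → x = y) ∧
  (∀ u v u' v' : V, Γ.r ![u, v] ![u', v'] ↔ Γ.r ![v, u] ![v', u'])

/-- The atomic-type partition `α_{k,Γ}` of `V^k` determined by a graph `Γ`. -/
def atomicPart {k : ℕ} (Γ : Setoid (Tup V 2)) : Setoid (Tup V k) where
  r u v := ∀ i j : Fin k, i ≠ j → Γ.r ![u i, u j] ![v i, v j]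
  iseqv := ⟨fun _ _ _ _ => Γ.iseqv.refl _, fun h i j hij => Γ.iseqv.symm (h i j hij),
    fun h h' i j hij => Γ.iseqv.trans (h i j hij) (h' i j hij)⟩

/-- `WL̄_{k,r}(Γ)`. -/
def WLbarR [Nonempty V] [Fintype V] (k r : ℕ) (Γ : Setoid (Tup V 2)) : Setoid (Tup V 2) :=
  if k ≤ 1 then Γ else prPart 2 (stabilize (WLop (k := k) r) (atomicPart Γ))

/-- `C̄_{k,r}(Γ)`. -/
def CbarR [Nonempty V] [Fintype V] (k r : ℕ) (Γ : Setoid (Tup V 2)) : Setoid (Tup V 2) :=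
  if k ≤ 1 then Γ else prPart 2 (stabilize (Cop (k := k) r) (atomicPart Γ))

/-- `WL̄_k(Γ) = WL̄_{k,1}(Γ)`. -/
def WLbar [Nonempty V] [Fintype V] (k : ℕ) (Γ : Setoid (Tup V 2)) : Setoid (Tup V 2) :=
  WLbarR k 1 Γ

/-- `C̄_k(Γ) = C̄_{k,1}(Γ)`. -/
def Cbar [Nonempty V] [Fintype V] (k : ℕ) (Γ : Setoid (Tup V 2)) : Setoid (Tup V 2) :=
  CbarR k 1 Γ

/-- `IM̄_k^F(Γ)`. -/
def IMbar (F : Type) [Field F] [Nonempty V] [Fintype V] [DecidableEq V]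
    (k : ℕ) (Γ : Setoid (Tup V 2)) : Setoid (Tup V 2) :=
  if k ≤ 1 then Γ else prPart 2 (stabilize (IMop (k := k) F) (atomicPart Γ))

/-- `IMt̄_k^F(Γ)`. -/
def IMtbar (F : Type) [Field F] [Nonempty V] [Fintype V] [DecidableEq V]
    (k : ℕ) (Γ : Setoid (Tup V 2)) : Setoid (Tup V 2) :=
  if k ≤ 1 then Γ else prPart 2 (stabilize (IMtop (k := k) F) (atomicPart Γ))

/-- A nonempty finite set together with a graph on it. -/
structure FinGraph where
  V : Type
  [instFintype : Fintype V]
  [instDecEq : DecidableEq V]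
  [instNonempty : Nonempty V]
  Γ : Setoid (Tup V 2)
  isGraph : IsGraph Γ

attribute [instance] FinGraph.instFintype FinGraph.instDecEq FinGraph.instNonempty

/-!
For `x ∈ V^r` let the colour type of `x` over `u` be the family of `γ`-colours of the
substitutions `u⟨i,x⟩`, `i ∈ [k]^(r)`. Equal `WL_{k,r}`-counts at `u` and `v` say exactly that
the fibres of the colour-type maps of `u` and `v` have equal sizes, hence so have the preimages
of any set of colour types.

For a graph-like `γ`, invariance and consistency amount to `γ` being closed under all
reindexings `u ↦ u ∘ M`, `M : [k] → [k]`. Both claims then follow from the transfer principle,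
because the relevant substitutions are reindexings of substitutions into `u`:
`(u ∘ J)⟨i,x⟩ = u⟨i',x⟩ ∘ M` for an injective `i'` avoiding the entries of `u` that are still
read, and `ext(w⟨i,x⟩) = (ext w)⟨i,x⟩ ∘ M` for the extension `ext w = w ∘ P` defining
`pr_{k-1}`, where `P : [k] → [k-1]` is a retraction of the inclusion.
-/

open Function

theorem Set.ncard_preimage_eq_of_ncard_fiber_eq {α β γ : Type*} [Finite α] [Finite β]
    {f : α → γ} {g : β → γ} (h : ∀ c, {a | f a = c}.ncard = {b | g b = c}.ncard)
    (S : Set γ) : (f ⁻¹' S).ncard = (g ⁻¹' S).ncard := by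
  have hfib : ∀ c, Nonempty ({a // f a = c} ≃ {b // g b = c}) := fun c => by
    rw [← Finite.card_eq]
    exact (Nat.card_coe_set_eq _).trans ((h c).trans (Nat.card_coe_set_eq _).symm)
  let e := Equiv.ofFiberEquiv fun c => (hfib c).some
  refine Set.ncard_congr' (e.subtypeEquiv fun a => ?_)
  change f a ∈ S ↔ g (e a) ∈ S
  rw [Equiv.ofFiberEquiv_map (g := g)]

section

variable {k r : ℕ}

theorem substTup_apply_of_injective (u : Tup V k) {i : Fin r → Fin k} (hi : Injective i)
    (x : Tup V r) (s : Fin r) : substTup u i x (i s) = x s := by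
  have h : ∃ s', i s' = i s := ⟨s, rfl⟩
  simp only [substTup, dif_pos h, hi h.choose_spec]

theorem substTup_apply_of_notMem (u : Tup V k) (i : Fin r → Fin k) (x : Tup V r) {t : Fin k}
    (ht : t ∉ Set.range i) : substTup u i x t = u t :=
  dif_neg ht

def WLCountsEq (r : ℕ) (γ : Setoid (Tup V k)) (u v : Tup V k) : Prop :=
  ∀ φ : (Fin r → Fin k) → Tup V k, (WLSet γ u φ).ncard = (WLSet γ v φ).ncard

def colourType (γ : Setoid (Tup V k)) (u : Tup V k) (x : Tup V r) :
    {i : Fin r → Fin k // Injective i} → Quotient γ :=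
  fun i => Quotient.mk γ (substTup u i.1 x)

theorem WLSet_eq_setOf_colourType (γ : Setoid (Tup V k)) (u : Tup V k)
    (φ : (Fin r → Fin k) → Tup V k) :
    WLSet γ u φ = {x | colourType γ u x = fun i => Quotient.mk γ (φ i.1)} := by
  ext x
  simp only [WLSet, Set.mem_ofPred_eq, funext_iff, colourType, Quotient.eq, Subtype.forall]

theorem ncard_colourType_fiber_eq {γ : Setoid (Tup V k)} {u v : Tup V k}
    (hcnt : WLCountsEq r γ u v)
    (t : {i : Fin r → Fin k // Injective i} → Quotient γ) :
    {x | colourType γ u x = t}.ncard = {x | colourType γ v x = t}.ncard := by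
  let φ : (Fin r → Fin k) → Tup V k := fun i => if h : Injective i then (t ⟨i, h⟩).out else u
  have ht : t = fun i => Quotient.mk γ (φ i.1) := by
    funext i
    simp only [φ, dif_pos i.2, Quotient.out_eq]
  rw [ht, ← WLSet_eq_setOf_colourType, ← WLSet_eq_setOf_colourType]
  exact hcnt φ

theorem ncard_setOf_forall_rel_eq [Finite V] {γ : Setoid (Tup V k)} {u v : Tup V k}
    (hcnt : WLCountsEq r γ u v)
    {ι : Type*} (g : ι → Fin r → Fin k) (hg : ∀ i, Injective (g i))
    (F : ι → Tup V k → Tup V k) (hF : ∀ i a b, γ.r a b → γ.r (F i a) (F i b))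
    (c : ι → Tup V k) :
    {x | ∀ i, γ.r (F i (substTup u (g i) x)) (c i)}.ncard
      = {x | ∀ i, γ.r (F i (substTup v (g i) x)) (c i)}.ncard := by
  let S : Set ({i : Fin r → Fin k // Injective i} → Quotient γ) :=
    {t | ∀ i z, Quotient.mk γ z = t ⟨g i, hg i⟩ → γ.r (F i z) (c i)}
  have hS : ∀ w, {x | ∀ i, γ.r (F i (substTup w (g i) x)) (c i)} = colourType γ w ⁻¹' S := by
    intro w
    ext x
    refine ⟨fun hx i z hz => ?_, fun hx i => hx i _ rfl⟩
    exact γ.iseqv.trans (hF i _ _ (Quotient.exact hz)) (hx i)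
  rw [hS, hS]
  exact Set.ncard_preimage_eq_of_ncard_fiber_eq (ncard_colourType_fiber_eq hcnt) S

def ReindexClosed (γ : Setoid (Tup V k)) : Prop :=
  ∀ u v : Tup V k, γ.r u v → ∀ M : Fin k → Fin k, γ.r (prTup M u) (prTup M v)

def clampFin {m : ℕ} (hm : 0 < m) (k : ℕ) : Fin k → Fin m :=
  fun t => ⟨min t (m - 1), by omega⟩

theorem extendTup_eq_prTup_clampFin [Nonempty V] {m : ℕ} (hm : 0 < m) (w : Tup V m) :
    extendTup k w = prTup (clampFin hm k) w := by
  funext t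
  by_cases ht : (t : ℕ) < m
  · simp [extendTup, prTup, clampFin, ht, Nat.min_eq_left (Nat.le_sub_one_of_lt ht)]
  · simp [extendTup, prTup, clampFin, ht, hm, Nat.min_eq_right (by omega : m - 1 ≤ t)]

theorem extendTup_self [Nonempty V] (w : Tup V k) : extendTup k w = w :=
  funext fun t => dif_pos t.isLt

theorem GraphLike.reindexClosed [Nonempty V] {γ : Setoid (Tup V k)} (hγ : GraphLike γ) :
    ReindexClosed γ := by
  intro u v h M
  have h' : γ.r (extendTup k (prTup M u)) (extendTup k (prTup M v)) := hγ.2.1 k le_rfl u v h M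
  rwa [extendTup_self, extendTup_self] at h'

theorem graphLike_of_reindexClosed [Nonempty V] {γ : Setoid (Tup V k)} (hγ : ReindexClosed γ)
    (heq : ∀ u v : Tup V k, γ.r u v → ∀ i j : Fin k, u i = u j → v i = v j) :
    GraphLike γ := by
  refine ⟨fun u v h τ => hγ u v h τ.symm, fun m _ u v h j => ?_, heq⟩
  rcases Nat.eq_zero_or_pos m with rfl | hm
  · rw [Subsingleton.elim (prTup j u) (prTup j v)]
  · show γ.r (extendTup k (prTup j u)) (extendTup k (prTup j v))
    rw [extendTup_eq_prTup_clampFin hm, extendTup_eq_prTup_clampFin hm]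
    exact hγ u v h _

theorem exists_substTup_prTup_eq (J : Fin k → Fin k) {i : Fin r → Fin k} (hi : Injective i) :
    ∃ i' : Fin r → Fin k, Injective i' ∧ ∃ M : Fin k → Fin k,
      ∀ (u : Tup V k) (x : Tup V r), substTup (prTup J u) i x = prTup M (substTup u i' x) := by
  classical
  -- `A` holds the entries of `u` still read off `(prTup J u)⟨i,x⟩`; `i'` puts `x` outside `A`.
  let A : Finset (Fin k) := (Finset.univ.image i)ᶜ.image J
  have hr : r ≤ k := by simpa using Fintype.card_le_of_injective i hi
  have hA : A.card ≤ k - r := calc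
    A.card ≤ (Finset.univ.image i)ᶜ.card := Finset.card_image_le
    _ = k - r := by simp [Finset.card_compl, Finset.card_image_of_injective _ hi]
  obtain ⟨e⟩ : Nonempty (Fin r ↪ ↥(Aᶜ)) := Embedding.nonempty_of_card_le (by
    simp only [Fintype.card_fin, Fintype.card_coe, Finset.card_compl]
    omega)
  let i' : Fin r → Fin k := (↑) ∘ e
  have hi' : Injective i' := Subtype.val_injective.comp e.injective
  let M : Fin k → Fin k := fun t => if h : ∃ s, i s = t then i' h.choose else J t
  refine ⟨i', hi', M, fun u x => funext fun t => ?_⟩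
  show substTup (prTup J u) i x t = substTup u i' x (M t)
  by_cases h : ∃ s, i s = t
  · rw [show M t = i' h.choose from dif_pos h, substTup_apply_of_injective u hi']
    exact dif_pos h
  · have hJt : J t ∉ Set.range i' := by
      rintro ⟨s, hs⟩
      refine Finset.mem_compl.mp (e s).2 ?_
      rw [show ((e s) : Fin k) = J t from hs]
      exact Finset.mem_image_of_mem J (by simpa using h)
    rw [show M t = J t from dif_neg h, substTup_apply_of_notMem u _ x hJt]
    exact dif_neg h

theorem prTup_substTup_eq_of_leftInverse {m : ℕ} {P : Fin k → Fin m} {ι : Fin m → Fin k}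
    (hPι : LeftInverse P ι) (w : Tup V m) {i : Fin r → Fin m} (hi : Injective i)
    (x : Tup V r) :
    prTup P (substTup w i x) = prTup (ι ∘ P) (substTup (prTup P w) (ι ∘ i) x) := by
  funext t
  simp only [prTup, Function.comp_apply]
  by_cases h : P t ∈ Set.range i
  · obtain ⟨s, hs⟩ := h
    rw [← hs, substTup_apply_of_injective w hi]
    exact (substTup_apply_of_injective _ (hPι.injective.comp hi) x s).symm
  · have h' : ι (P t) ∉ Set.range (ι ∘ i) := by
      rintro ⟨s, hs⟩
      exact h ⟨s, hPι.injective hs⟩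
    rw [substTup_apply_of_notMem w i x h, substTup_apply_of_notMem _ _ x h', prTup, hPι]

theorem WLop_rel_iff (γ : Setoid (Tup V k)) (h : r < k) {u v : Tup V k} :
    (WLop r γ).r u v ↔ γ.r u v ∧ WLCountsEq r γ u v := by
  rw [WLop, if_pos h]
  rfl

theorem WLop_of_not_lt (h : ¬r < k) (γ : Setoid (Tup V k)) : WLop r γ = γ := if_neg h

theorem refines_WLop (γ : Setoid (Tup V k)) : Refines γ (WLop r γ) := by
  by_cases h : r < k
  · exact fun u v huv => ((WLop_rel_iff γ h).1 huv).1
  · rw [WLop_of_not_lt h]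
    exact fun _ _ => id

theorem WLCountsEq.reindex [Finite V] {γ : Setoid (Tup V k)} (hγ : ReindexClosed γ)
    {u v : Tup V k} (h : WLCountsEq r γ u v) (J : Fin k → Fin k) :
    WLCountsEq r γ (prTup J u) (prTup J v) := by
  intro φ
  choose i' hi' M hM using
    fun i : {i : Fin r → Fin k // Injective i} => exists_substTup_prTup_eq (V := V) J i.2
  have hset : ∀ w, WLSet γ (prTup J w) φ
      = {x | ∀ i, γ.r (prTup (M i) (substTup w (i' i) x)) (φ i.1)} := by
    intro w
    ext x
    simp only [WLSet, Set.mem_ofPred_eq, Subtype.forall]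
    exact forall₂_congr fun i hi => by rw [hM ⟨i, hi⟩]
  rw [hset, hset]
  exact ncard_setOf_forall_rel_eq h i' hi' _ (fun i a b hab => hγ a b hab (M i)) _

theorem reindexClosed_WLop [Finite V] {γ : Setoid (Tup V k)} (hγ : ReindexClosed γ) :
    ReindexClosed (WLop r γ) := by
  by_cases hrk : r < k
  · intro u v h M
    rw [WLop_rel_iff γ hrk] at h ⊢
    exact ⟨hγ u v h.1 M, h.2.reindex hγ M⟩
  · rwa [WLop_of_not_lt hrk]

theorem graphLike_WLop [Nonempty V] [Finite V] {γ : Setoid (Tup V k)} (hγ : GraphLike γ) :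
    GraphLike (WLop r γ) :=
  graphLike_of_reindexClosed (reindexClosed_WLop hγ.reindexClosed)
    fun u v h => hγ.2.2 u v (refines_WLop γ u v h)

theorem partEquiv_prPart_WLop [Nonempty V] [Finite V] {γ : Setoid (Tup V k)} (hk : 2 ≤ k)
    (hγ : ReindexClosed γ) (hst : Refines (WLop r γ) γ) :
    PartEquiv (prPart (k - 1) γ) (WLop r (prPart (k - 1) γ)) := by
  by_cases hrk : r < k - 1
  swap
  · rw [WLop_of_not_lt hrk]
    exact ⟨fun _ _ => id, fun _ _ => id⟩
  refine ⟨refines_WLop _, fun w w' h => (WLop_rel_iff _ hrk).2 ⟨h, fun φ => ?_⟩⟩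
  have hm : 0 < k - 1 := by omega
  let P := clampFin hm k
  let ι : Fin (k - 1) → Fin k := Fin.castLE (Nat.sub_le k 1)
  have hPι : LeftInverse P ι := fun t => Fin.ext <| by
    simp only [P, ι, clampFin, Fin.val_castLE, inf_eq_left]
    omega
  have hcnt : WLCountsEq r γ (prTup P w) (prTup P w') := by
    have h' : γ.r (extendTup k w) (extendTup k w') := h
    rw [extendTup_eq_prTup_clampFin hm, extendTup_eq_prTup_clampFin hm] at h'
    exact ((WLop_rel_iff γ (by omega)).1 (hst _ _ h')).2
  have hset : ∀ w, WLSet (prPart (k - 1) γ) w φ = {x | ∀ i : {i // Injective i},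
      γ.r (prTup (ι ∘ P) (substTup (prTup P w) (ι ∘ i.1) x)) (extendTup k (φ i.1))} := by
    intro w
    ext x
    simp only [WLSet, Set.mem_ofPred_eq, Subtype.forall]
    refine forall₂_congr fun i hi => ?_
    rw [← prTup_substTup_eq_of_leftInverse hPι w hi x, ← extendTup_eq_prTup_clampFin]
    rfl
  rw [hset, hset]
  exact ncard_setOf_forall_rel_eq hcnt _ (fun i => hPι.injective.comp i.2) _
    (fun _ a b hab => hγ a b hab _) _

end

/-- `WL_{k,r}` is a graph-like refinement operator, and projections of graph-like
fixed points are fixed points. -/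
theorem wl_refinement_procedure (V : Type) [Fintype V] [Nonempty V] (k r : ℕ) :
    (∀ γ : Setoid (Tup V k), GraphLike γ → GraphLike (WLop r γ)) ∧
    (∀ γ : Setoid (Tup V k), 2 ≤ k → GraphLike γ → PartEquiv γ (WLop r γ) →
      PartEquiv (prPart (k - 1) γ) (WLop r (prPart (k - 1) γ))) :=
  ⟨fun _ hγ => graphLike_WLop hγ,
    fun _ hk hγ hst => partEquiv_prPart_WLop hk hγ.reindexClosed hst.2⟩

end
end

section
/- For all k, r ∈ ℕ with 1 ≤ r ≤ k and every nonempty finite set V, if γ ∈ P(V^k) is graph-like and C_{k,r}-stable, then its (k−r+1)-projection pr_{k−r+1} γ is C_{k−r+1}-stable. -/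
open Classical Matrix

noncomputable section

variable {V : Type}

/-!
Let `m = k - r + 1` and `ext a = (a₁, …, aₘ, aₘ, …, aₘ) ∈ V^k` for `a ∈ V^m`. For a
position `p ≤ m`, the map `x ↦ ext (a⟨p,x⟩)` lands among the `r`-substitutions of `ext a`
at the positions `J = {p, m+1, …, k}`. Conversely, if `(ext a)⟨J,y⟩` has the colour of
`ext w`, graph-likeness forces its entries at positions `m, …, k` to coincide, so it is
`ext (a⟨p,x⟩)` with `x` its `p`-th entry. Hence the colour class of `ext w` meets both
images in the same set: the counts of `pr_m γ` at `a` are counts of `γ` at `ext a`, and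
`C_{k,r}`-stability of `γ` applies.
-/

theorem Set.ncard_preimage_eq_ncard_inter_range {α β : Type*} {f : α → β}
    (hf : Function.Injective f) (s : Set β) : (f ⁻¹' s).ncard = (s ∩ Set.range f).ncard := by
  rw [← Set.image_preimage_eq_inter_range, Set.ncard_image_of_injective _ hf]

section Substitution

variable {k r : ℕ}

theorem substTup_apply_mem (v : Tup V k) {i : Fin r → Fin k}
    (hi : Function.Injective i) (x : Tup V r) (s : Fin r) :
    substTup v i x (i s) = x s := by
  unfold substTup
  rw [dif_pos ⟨s, rfl⟩]
  congr 1
  exact hi (⟨s, rfl⟩ : ∃ t, i t = i s).choose_spec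

theorem substTup_apply_of_notMem_range (v : Tup V k) (i : Fin r → Fin k)
    (x : Tup V r) {p : Fin k} (hp : p ∉ Set.range i) :
    substTup v i x p = v p :=
  dif_neg hp

theorem prTup_substTup (v : Tup V k) {i : Fin r → Fin k} (hi : Function.Injective i)
    (x : Tup V r) : prTup i (substTup v i x) = x :=
  funext (substTup_apply_mem v hi x)

theorem substTup_injective (v : Tup V k) {i : Fin r → Fin k} (hi : Function.Injective i) :
    Function.Injective (substTup v i) :=
  Function.LeftInverse.injective (prTup_substTup v hi)

theorem substTup_prTup_of_eqOn_compl_range {u v : Tup V k} {i : Fin r → Fin k}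
    (hi : Function.Injective i) (h : ∀ p ∉ Set.range i, u p = v p) :
    substTup u i (prTup i v) = v := by
  funext p
  by_cases hp : p ∈ Set.range i
  · obtain ⟨s, rfl⟩ := hp
    exact substTup_apply_mem u hi _ s
  · rw [substTup_apply_of_notMem_range u i _ hp, h p hp]

theorem substTup_fin_one (v : Tup V k) (i : Fin 1 → Fin k) (x : Tup V 1) :
    substTup v i x = Function.update v (i 0) (x 0) := by
  funext p
  by_cases hp : p = i 0
  · subst hp
    rw [substTup_apply_mem v (Function.injective_of_subsingleton i) x 0, Function.update_self]
  · rw [Function.update_of_ne hp, substTup_apply_of_notMem_range]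
    rintro ⟨s, rfl⟩
    exact hp (congrArg i (Subsingleton.elim s 0))

end Substitution

section Extension

variable [Nonempty V] {m : ℕ} (k : ℕ)

theorem extendTup_of_lt (a : Tup V m) {p : Fin k} (hp : (p : ℕ) < m) :
    extendTup k a p = a ⟨p, hp⟩ :=
  dif_pos hp

theorem extendTup_of_le (a : Tup V m) (hm : 0 < m) {p : Fin k} (hp : m ≤ p) :
    extendTup k a p = a ⟨m - 1, by omega⟩ := by
  rw [extendTup, dif_neg (by omega), dif_pos hm]

theorem extendTup_castLE (a : Tup V m) (hmk : m ≤ k) (p : Fin m) :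
    extendTup k a (Fin.castLE hmk p) = a p :=
  extendTup_of_lt k a p.isLt

theorem eq_extendTup_of_forall {z : Tup V k} {b : Tup V m} (hm : 0 < m) (hmk : m ≤ k)
    (hlt : ∀ (p : Fin k) (hp : (p : ℕ) < m), z p = b ⟨p, hp⟩)
    (hge : ∀ p : Fin k, m ≤ p → z p = z ⟨m - 1, by omega⟩) :
    z = extendTup k b := by
  funext p
  by_cases hp : (p : ℕ) < m
  · rw [hlt p hp, extendTup_of_lt k b hp]
  · rw [hge p (by omega), hlt _ (by simp only; omega), extendTup_of_le k b hm (by omega)]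

end Extension

theorem GraphLike.apply_eq_apply_of_rel [Nonempty V] {k : ℕ} {γ : Setoid (Tup V k)}
    (hγ : GraphLike γ) {u v : Tup V k} (huv : γ.r u v) {p q : Fin k} (hv : v p = v q) :
    u p = u q :=
  hγ.2.2 v u (γ.iseqv.symm huv) p q hv

theorem exists_injective_range_eq {k r : ℕ} (hr : 1 ≤ r) (hrk : r ≤ k) (q : Fin (k - r + 1)) :
    ∃ j : Fin r → Fin k, Function.Injective j ∧
      ∀ p : Fin k, p ∈ Set.range j ↔ (p : ℕ) = q ∨ k - r + 1 ≤ p := by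
  let S : Finset (Fin k) := insert ⟨q, by omega⟩ (Finset.Ioi ⟨k - r, by omega⟩)
  have hS : S.card = r := by
    rw [Finset.card_insert_of_notMem (by simp [Fin.lt_def]; omega), Fin.card_Ioi, Fin.val_mk]
    omega
  refine ⟨S.orderEmbOfFin hS, (S.orderEmbOfFin hS).injective, fun p => ?_⟩
  simp [S, Finset.range_orderEmbOfFin, Fin.ext_iff, Fin.lt_def]

theorem extendTup_substTup_injective [Nonempty V] {m : ℕ} (k : ℕ) (hmk : m ≤ k)
    (i : Fin 1 → Fin m) (a : Tup V m) :
    Function.Injective fun x : Tup V 1 => extendTup k (substTup a i x) := by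
  have hread : ∀ x : Tup V 1, extendTup k (substTup a i x) (Fin.castLE hmk (i 0)) = x 0 :=
    fun x => by rw [extendTup_castLE, substTup_fin_one, Function.update_self]
  intro x x' hxx'
  funext s
  rw [Subsingleton.elim s 0, ← hread x, ← hread x']
  exact congrFun hxx' _

section Counting

variable [Nonempty V] {k m r : ℕ} {i : Fin 1 → Fin m} {j : Fin r → Fin k}

theorem extendTup_substTup_apply_of_notMem_range
    (hrange : ∀ p : Fin k, p ∈ Set.range j ↔ (p : ℕ) = i 0 ∨ m ≤ p)
    (a : Tup V m) (x : Tup V 1) {p : Fin k} (hp : p ∉ Set.range j) :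
    extendTup k (substTup a i x) p = extendTup k a p := by
  have hpm : (p : ℕ) < m := by have := (hrange p).not.mp hp; omega
  have hpi : (⟨p, hpm⟩ : Fin m) ≠ i 0 := fun h => (hrange p).not.mp hp (.inl (by rw [← h]))
  rw [extendTup_of_lt k _ hpm, extendTup_of_lt k _ hpm, substTup_fin_one,
    Function.update_of_ne hpi]

theorem range_extendTup_substTup_subset (hj : Function.Injective j)
    (hrange : ∀ p : Fin k, p ∈ Set.range j ↔ (p : ℕ) = i 0 ∨ m ≤ p) (a : Tup V m) :
    Set.range (fun x : Tup V 1 => extendTup k (substTup a i x)) ⊆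
      Set.range (substTup (extendTup k a) j) := by
  rintro _ ⟨x, rfl⟩
  exact ⟨_, substTup_prTup_of_eqOn_compl_range hj fun p hp =>
    (extendTup_substTup_apply_of_notMem_range hrange a x hp).symm⟩

theorem mem_range_extendTup_substTup_of_rel {γ : Setoid (Tup V k)} (hγ : GraphLike γ)
    (hmk : m ≤ k) (hrange : ∀ p : Fin k, p ∈ Set.range j ↔ (p : ℕ) = i 0 ∨ m ≤ p)
    (a w : Tup V m) {y : Tup V r} (hy : γ.r (substTup (extendTup k a) j y) (extendTup k w)) :
    substTup (extendTup k a) j y ∈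
      Set.range (fun x : Tup V 1 => extendTup k (substTup a i x)) := by
  set z := substTup (extendTup k a) j y
  have hm : 0 < m := (i 0).pos
  refine ⟨fun _ => z (Fin.castLE hmk (i 0)), (eq_extendTup_of_forall k hm hmk ?_ ?_).symm⟩
  · intro p hp
    by_cases hpj : p ∈ Set.range j
    · have hpi : p = Fin.castLE hmk (i 0) := by
        have := (hrange p).mp hpj
        ext; simp only [Fin.val_castLE]; omega
      subst hpi
      rw [substTup_fin_one]
      exact (Function.update_self (i 0) _ a).symm
    · rw [← extendTup_of_lt k (substTup a i _) hp,
        extendTup_substTup_apply_of_notMem_range hrange a _ hpj]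
      exact substTup_apply_of_notMem_range _ j y hpj
  · intro p hp
    refine hγ.apply_eq_apply_of_rel hy ?_
    rw [extendTup_of_le k w hm hp, extendTup_of_lt k w (by simp only; omega)]

theorem ncard_cSet_prPart_eq {γ : Setoid (Tup V k)} (hγ : GraphLike γ) (hmk : m ≤ k)
    (hj : Function.Injective j)
    (hrange : ∀ p : Fin k, p ∈ Set.range j ↔ (p : ℕ) = i 0 ∨ m ≤ p) (a w : Tup V m) :
    (CSet (prPart m γ) a i w).ncard = (CSet γ (extendTup k a) j (extendTup k w)).ncard := by
  set C : Set (Tup V k) := {z | γ.r z (extendTup k w)}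
  have hinter : C ∩ Set.range (fun x : Tup V 1 => extendTup k (substTup a i x)) =
      C ∩ Set.range (substTup (extendTup k a) j) := by
    refine subset_antisymm
      (Set.inter_subset_inter_right C (range_extendTup_substTup_subset hj hrange a)) ?_
    rintro _ ⟨hC, y, rfl⟩
    exact ⟨hC, mem_range_extendTup_substTup_of_rel hγ hmk hrange a w hC⟩
  calc (CSet (prPart m γ) a i w).ncard
      = (C ∩ Set.range fun x : Tup V 1 => extendTup k (substTup a i x)).ncard :=
        Set.ncard_preimage_eq_ncard_inter_range (extendTup_substTup_injective k hmk i a) C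
    _ = (C ∩ Set.range (substTup (extendTup k a) j)).ncard := by rw [hinter]
    _ = (CSet γ (extendTup k a) j (extendTup k w)).ncard :=
        (Set.ncard_preimage_eq_ncard_inter_range (substTup_injective _ hj) C).symm

end Counting

theorem c_stable_proj_c_stable_general (V : Type) [Nonempty V] (k r : ℕ)
    (hr1 : 1 ≤ r) (γ : Setoid (Tup V k)) (hγ : GraphLike γ)
    (h : CStable r γ) : CStable 1 (prPart (k - r + 1) γ) := by
  intro hm u v huv i _ w
  have hrk : r < k := by omega
  obtain ⟨j, hj, hrange⟩ := exists_injective_range_eq hr1 hrk.le (i 0)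
  rw [ncard_cSet_prPart_eq hγ (by omega) hj hrange, ncard_cSet_prPart_eq hγ (by omega) hj hrange]
  exact h hrk _ _ huv j hj _

/-- The `(k-r+1)`-projection of a `C_{k,r}`-stable graph-like partition is `C_{k-r+1}`-stable. -/
theorem c_stable_proj_c_stable (V : Type) [Fintype V] [Nonempty V] (k r : ℕ)
    (hr1 : 1 ≤ r) (hrk : r ≤ k) (γ : Setoid (Tup V k)) (hγ : GraphLike γ)
    (h : CStable r γ) : CStable 1 (prPart (k - r + 1) γ) :=
  c_stable_proj_c_stable_general V k r hr1 γ hγ h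

end
end
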